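/- Let N ≥ 3, T > 0, and let ξ : [0,T] → ℝ^N be Hölder continuous with exponent α > 1/2. Define F(x,t) = ∫₀^t Φ(x-ξ(s), t-s) ds with Φ the heat kernel. Then for each fixed t ∈ (0,T), F(x,t) = (1/(N(N-2)ω_N)) |x-ξ(t)|^{2-N} + o(|x-ξ(t)|^{2-N}) as x → ξ(t), i.e., lim_{x→ξ(t)} |x-ξ(t)|^{N-2} F(x,t) = 1/(N(N-2)ω_N). -/

import Mathlib

open MeasureTheory Real Set Metric Filter Topology

noncomputable section

/-- The heat kernel on ℝ^N. -/
def heatKernel (N : ℕ) (x : EuclideanSpace ℝ (Fin N)) (t : ℝ) : ℝ :=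
  (4 * π * t) ^ (-(N : ℝ) / 2) * Real.exp (-‖x‖ ^ 2 / (4 * t))

/-- The time-integrated heat kernel along the curve ξ. -/
def Fsol (N : ℕ) (ξ : ℝ → EuclideanSpace ℝ (Fin N))
    (x : EuclideanSpace ℝ (Fin N)) (t : ℝ) : ℝ :=
  ∫ s in (0 : ℝ)..t, heatKernel N (x - ξ s) (t - s)

/-!
Substituting `s = t - r² u` with `r = ‖x - ξ t‖` and using the parabolic scaling of the heat
kernel turns `r ^ (N - 2) * Fsol N ξ x t` into `∫₀^{t/r²} Φ(r⁻¹ (x - ξ (t - r² u)), u) du`.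
Since `‖ξ t - ξ (t - r² u)‖ ≤ L r^{2α} u^α` and `2α > 1`, the rescaled point has norm
`1 + O(r^{2α-1} u^α)`, so the integrand tends to `(4πu)^{-N/2} e^{-1/(4u)}`; for small `r` its norm
stays `≥ 1/2` when `u ≤ 1`, which gives the integrable majorant `(4πu)^{-N/2} e^{(1 - 1/u)/16}`
(here `N > 2` is needed at `u → ∞`). Dominated convergence and the Gamma integral
`∫₀^∞ (4πu)^{-N/2} e^{-1/(4u)} du = Γ(N/2 - 1) / (4 π^{N/2}) = 1 / (N (N - 2) ω_N)` conclude.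
-/

section GammaIntegral

variable {p c : ℝ}

-- The substitution `u = x⁻¹`, in the shape of `integral_comp_rpow_Ioi` with `p = -1`.
lemma rpow_sub_two_mul_exp_eq_comp_inv {x : ℝ} (hx : 0 < x) :
    x ^ (p - 2) * exp (-c * x ^ (1 : ℝ)) =
      x ^ ((-1 : ℝ) - 1) • ((x ^ (-1 : ℝ)) ^ (-p) * exp (-c / x ^ (-1 : ℝ))) := by
  rw [smul_eq_mul, rpow_neg_one, inv_rpow hx.le, ← rpow_neg hx.le, neg_neg, rpow_one,
    div_inv_eq_mul, ← mul_assoc, ← rpow_add hx]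
  ring_nf

lemma integrableOn_rpow_neg_mul_exp_neg_div (hp : 1 < p) (hc : 0 < c) :
    IntegrableOn (fun u : ℝ => u ^ (-p) * exp (-c / u)) (Ioi 0) := by
  rw [← integrableOn_Ioi_comp_rpow_iff' _ (by norm_num : (-1 : ℝ) ≠ 0)]
  exact (integrableOn_rpow_mul_exp_neg_mul_rpow (by linarith) one_pos hc).congr_fun
    (fun x hx => rpow_sub_two_mul_exp_eq_comp_inv hx) measurableSet_Ioi

lemma integral_rpow_neg_mul_exp_neg_div (hp : 1 < p) (hc : 0 < c) :
    ∫ u in Ioi (0 : ℝ), u ^ (-p) * exp (-c / u) = c ^ (1 - p) * Gamma (p - 1) := by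
  rw [← integral_comp_rpow_Ioi _ (by norm_num : (-1 : ℝ) ≠ 0)]
  calc _ = ∫ x in Ioi (0 : ℝ), x ^ (p - 2) * exp (-c * x ^ (1 : ℝ)) := by
        refine setIntegral_congr_fun measurableSet_Ioi fun x hx => ?_
        rw [rpow_sub_two_mul_exp_eq_comp_inv hx, abs_neg, abs_one, one_mul]
    _ = _ := by
        rw [integral_rpow_mul_exp_neg_mul_rpow one_pos (by linarith) hc]
        ring_nf

end GammaIntegral

lemma integral_four_pi_mul_rpow_mul_exp {n : ℝ} (hn : 2 < n) :
    ∫ u in Ioi (0 : ℝ), (4 * π * u) ^ (-n / 2) * exp (-1 / (4 * u)) =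
      Gamma (n / 2 - 1) / (4 * π ^ (n / 2)) := by
  calc _ = ∫ u in Ioi (0 : ℝ), (4 * π) ^ (-n / 2) * (u ^ (-(n / 2)) * exp (-(1 / 4) / u)) := by
        refine setIntegral_congr_fun measurableSet_Ioi fun u hu => ?_
        rw [mul_rpow (by positivity) (le_of_lt hu), neg_div, mul_assoc]
        ring_nf
    _ = (4 * π) ^ (-n / 2) * ((1 / 4) ^ (1 - n / 2) * Gamma (n / 2 - 1)) := by
        rw [integral_const_mul, integral_rpow_neg_mul_exp_neg_div (by linarith) (by norm_num)]
    _ = _ := by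
        have h4 : (4 : ℝ) ^ (-n / 2) * 4 ^ (-(1 - n / 2)) = 4⁻¹ := by
          rw [← rpow_add (by norm_num), show -n / 2 + -(1 - n / 2) = -1 by ring, rpow_neg_one]
        rw [mul_rpow (by norm_num) pi_pos.le, one_div, inv_rpow (by norm_num),
          ← rpow_neg (by norm_num), neg_div 2 n, rpow_neg pi_pos.le, ← neg_div]
        linear_combination (Gamma (n / 2 - 1) * (π ^ (n / 2))⁻¹) * h4

lemma integrableOn_four_pi_mul_rpow_mul_exp {n : ℝ} (hn : 2 < n) :
    IntegrableOn (fun u : ℝ => (4 * π * u) ^ (-n / 2) * exp ((1 - u⁻¹) / 16)) (Ioi 0) := by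
  have hint := (integrableOn_rpow_neg_mul_exp_neg_div (p := n / 2) (by linarith)
    (by norm_num : (0 : ℝ) < 1 / 16)).const_mul ((4 * π) ^ (-n / 2) * exp (1 / 16))
  refine IntegrableOn.congr_fun hint (fun u hu => ?_) measurableSet_Ioi
  rw [mul_rpow (by positivity) (le_of_lt hu), neg_div,
    show (1 - u⁻¹) / 16 = 1 / 16 + -(1 / 16) / u by ring, exp_add]
  ring

lemma natCast_mul_volume_ball_one {N : ℕ} (hN : 3 ≤ N) :
    (N : ℝ) * ((N : ℝ) - 2) * (volume (ball (0 : EuclideanSpace ℝ (Fin N)) 1)).toReal =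
      4 * π ^ ((N : ℝ) / 2) / Gamma ((N : ℝ) / 2 - 1) := by
  have hN' : (3 : ℝ) ≤ N := by exact_mod_cast hN
  have : Nonempty (Fin N) := ⟨⟨0, by omega⟩⟩
  have hΓ : Gamma ((N : ℝ) / 2 + 1) = (N / 2) * ((N / 2 - 1) * Gamma (N / 2 - 1)) := by
    rw [Gamma_add_one (by positivity), ← Gamma_add_one (s := (N : ℝ) / 2 - 1) (by linarith),
      sub_add_cancel]
  have hπ : sqrt π ^ N = π ^ ((N : ℝ) / 2) := by
    rw [sqrt_eq_rpow, ← rpow_natCast, ← rpow_mul pi_pos.le, one_div_mul_eq_div]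
  rw [EuclideanSpace.volume_ball, Fintype.card_fin, ENNReal.toReal_mul, ENNReal.toReal_pow,
    ENNReal.toReal_ofReal zero_le_one, one_pow, one_mul, ENNReal.toReal_ofReal (by positivity),
    hπ, hΓ]
  have hΓpos := Gamma_pos_of_pos (by linarith : (0 : ℝ) < N / 2 - 1)
  have hN2 : (N : ℝ) - 2 ≠ 0 := by linarith
  field_simp
  ring

section HeatKernel

variable {N : ℕ}

lemma heatKernel_nonneg {u : ℝ} (hu : 0 ≤ u) (y : EuclideanSpace ℝ (Fin N)) :
    0 ≤ heatKernel N y u := by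
  unfold heatKernel; positivity

lemma rpow_mul_heatKernel_sq_mul {r u : ℝ} (hr : 0 < r) (hu : 0 ≤ u)
    (y : EuclideanSpace ℝ (Fin N)) :
    r ^ (N : ℝ) * heatKernel N y (r ^ 2 * u) = heatKernel N (r⁻¹ • y) u := by
  have hr2 : (r ^ 2) ^ (-(N : ℝ) / 2) = (r ^ (N : ℝ))⁻¹ := by
    rw [← rpow_natCast r 2, ← rpow_mul hr.le, ← rpow_neg hr.le]
    ring_nf
  have hy : ‖r⁻¹ • y‖ ^ 2 = ‖y‖ ^ 2 / r ^ 2 := by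
    rw [norm_smul, norm_inv, norm_of_nonneg hr.le]
    ring
  rw [heatKernel, heatKernel, hy, show 4 * π * (r ^ 2 * u) = r ^ 2 * (4 * π * u) by ring,
    mul_rpow (by positivity) (by positivity), hr2]
  field_simp

lemma ContinuousOn.heatKernel {v : ℝ → EuclideanSpace ℝ (Fin N)} {s : Set ℝ}
    (hv : ContinuousOn v s) (hs : s ⊆ Ioi 0) :
    ContinuousOn (fun u => heatKernel N (v u) u) s := by
  unfold _root_.heatKernel
  refine ContinuousOn.mul ?_ ?_
  · exact ContinuousOn.rpow_const (by fun_prop) fun u hu =>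
      Or.inl (by have : 0 < u := hs hu; positivity)
  · exact continuous_exp.comp_continuousOn
      ((hv.norm.pow 2).neg.div (by fun_prop) fun u hu => by have : 0 < u := hs hu; positivity)

lemma heatKernel_le_of_half_le_norm {u : ℝ} (hu : 0 < u) {y : EuclideanSpace ℝ (Fin N)}
    (hy : u ≤ 1 → 1 / 2 ≤ ‖y‖) :
    heatKernel N y u ≤ (4 * π * u) ^ (-(N : ℝ) / 2) * exp ((1 - u⁻¹) / 16) := by
  refine mul_le_mul_of_nonneg_left (exp_le_exp.2 ?_) (by positivity)
  rcases le_or_gt u 1 with hu1 | hu1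
  · have : (1 / 2) ^ 2 ≤ ‖y‖ ^ 2 := pow_le_pow_left₀ (by norm_num) (hy hu1) 2
    calc -‖y‖ ^ 2 / (4 * u) ≤ -(1 / 2) ^ 2 / (4 * u) := by gcongr
      _ ≤ (1 - u⁻¹) / 16 := by field_simp; linarith
  · calc -‖y‖ ^ 2 / (4 * u) ≤ 0 := div_nonpos_of_nonpos_of_nonneg (by simp) (by positivity)
      _ ≤ (1 - u⁻¹) / 16 := by
        have : u⁻¹ ≤ 1 := inv_le_one_of_one_le₀ hu1.le
        linarith

end HeatKernel

lemma Fsol_eq_integral_rescaled {N : ℕ} (ξ : ℝ → EuclideanSpace ℝ (Fin N))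
    (x : EuclideanSpace ℝ (Fin N)) {t r : ℝ} (ht : 0 ≤ t) (hr : 0 < r) :
    r ^ ((N : ℝ) - 2) * Fsol N ξ x t =
      ∫ u in (0 : ℝ)..t / r ^ 2, heatKernel N (r⁻¹ • (x - ξ (t - r ^ 2 * u))) u := by
  have hr2 : r ^ 2 ≠ 0 := by positivity
  have hreverse : Fsol N ξ x t = ∫ τ in (0 : ℝ)..t, heatKernel N (x - ξ (t - τ)) τ := by
    rw [Fsol]
    simpa using (intervalIntegral.integral_comp_sub_left
      (fun τ => heatKernel N (x - ξ (t - τ)) τ) t (a := 0) (b := t))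
  have hscale := intervalIntegral.integral_comp_mul_left
      (fun τ => heatKernel N (x - ξ (t - τ)) τ) hr2 (a := 0) (b := t / r ^ 2)
  rw [mul_zero, mul_div_cancel₀ _ hr2, ← hreverse] at hscale
  calc r ^ ((N : ℝ) - 2) * Fsol N ξ x t
      = r ^ ((N : ℝ) - 2) * (r ^ 2 *
          ∫ u in (0 : ℝ)..t / r ^ 2, heatKernel N (x - ξ (t - r ^ 2 * u)) (r ^ 2 * u)) := by
        rw [hscale, smul_eq_mul, mul_inv_cancel_left₀ hr2]
    _ = ∫ u in (0 : ℝ)..t / r ^ 2,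
          r ^ (N : ℝ) * heatKernel N (x - ξ (t - r ^ 2 * u)) (r ^ 2 * u) := by
        rw [← mul_assoc, ← rpow_natCast r 2, ← rpow_add hr, Nat.cast_ofNat, sub_add_cancel,
          intervalIntegral.integral_const_mul]
    _ = _ := by
        refine intervalIntegral.integral_congr fun u hu => rpow_mul_heatKernel_sq_mul hr ?_ _
        rw [uIcc_of_le (by positivity)] at hu
        exact hu.1

section HolderCurve

variable {E : Type*} [NormedAddCommGroup E] {ξ : ℝ → E} {T L α t : ℝ}

lemma continuousOn_of_norm_sub_le_rpow {s : Set ℝ} (hα : 0 < α)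
    (hH : ∀ a ∈ s, ∀ b ∈ s, ‖ξ a - ξ b‖ ≤ L * |a - b| ^ α) : ContinuousOn ξ s := by
  intro a ha
  rw [ContinuousWithinAt, tendsto_iff_norm_sub_tendsto_zero]
  have hbound : Tendsto (fun b => L * |b - a| ^ α) (𝓝[s] a) (𝓝 0) := by
    have : Continuous fun b : ℝ => L * |b - a| ^ α := by fun_prop (disch := exact hα.le)
    simpa [zero_rpow hα.ne'] using (this.continuousWithinAt (s := s) (x := a)).tendsto
  exact squeeze_zero' (.of_forall fun _ => norm_nonneg _)
    (eventually_mem_nhdsWithin.mono fun b hb => hH b hb a ha) hbound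

lemma tendsto_norm_sub_rpow_nhdsNE (a : E) {β : ℝ} (hβ : 0 < β) :
    Tendsto (fun x => ‖x - a‖ ^ β) (𝓝[≠] a) (𝓝 0) := by
  have hrpow : Tendsto (fun r : ℝ => r ^ β) (𝓝 0) (𝓝 0) := by
    simpa [zero_rpow hβ.ne'] using (continuousAt_rpow_const 0 β (Or.inr hβ.le)).tendsto
  exact hrpow.comp ((tendsto_norm_sub_self_nhdsNE a).mono_right nhdsWithin_le_nhds)

lemma eventually_pos_and_norm_sub_sq_mul_le (a : E) {u t : ℝ} (ht : 0 < t) :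
    ∀ᶠ x in 𝓝[≠] a, 0 < ‖x - a‖ ∧ ‖x - a‖ ^ 2 * u ≤ t := by
  have hsq : Tendsto (fun r : ℝ => r ^ 2 * u) (𝓝 0) (𝓝 0) :=
    (by fun_prop : Continuous fun r : ℝ => r ^ 2 * u).tendsto' 0 0 (by simp)
  have hr := tendsto_norm_sub_self_nhdsNE a
  exact (hr.eventually eventually_mem_nhdsWithin).and
    ((hsq.comp (hr.mono_right nhdsWithin_le_nhds)).eventually_le_const ht)

variable [NormedSpace ℝ E]

lemma abs_norm_inv_smul_sub_one_le {x a b : E} (h : 0 < ‖x - a‖) :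
    |‖‖x - a‖⁻¹ • (x - b)‖ - 1| ≤ ‖a - b‖ / ‖x - a‖ := by
  rw [norm_smul, norm_inv, norm_norm, ← div_eq_inv_mul, ← div_self h.ne', ← sub_div, abs_div,
    abs_norm]
  gcongr
  calc |‖x - b‖ - ‖x - a‖| ≤ ‖(x - b) - (x - a)‖ := abs_norm_sub_norm_le _ _
    _ = ‖a - b‖ := by rw [sub_sub_sub_cancel_left]

lemma abs_norm_rescaled_sub_one_le
    (hH : ∀ a ∈ Icc 0 T, ∀ b ∈ Icc 0 T, ‖ξ a - ξ b‖ ≤ L * |a - b| ^ α)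
    (htT : t ≤ T) {x : E} (hx : 0 < ‖x - ξ t‖) {u : ℝ} (hu : 0 ≤ u)
    (hut : ‖x - ξ t‖ ^ 2 * u ≤ t) :
    |‖‖x - ξ t‖⁻¹ • (x - ξ (t - ‖x - ξ t‖ ^ 2 * u))‖ - 1| ≤
      L * ‖x - ξ t‖ ^ (2 * α - 1) * u ^ α := by
  set r := ‖x - ξ t‖
  have hs : 0 ≤ r ^ 2 * u := by positivity
  have hholder : ‖ξ t - ξ (t - r ^ 2 * u)‖ ≤ L * (r ^ 2 * u) ^ α := by
    have := hH t ⟨hs.trans hut, htT⟩ (t - r ^ 2 * u) ⟨by linarith, by linarith⟩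
    rwa [sub_sub_cancel, abs_of_nonneg hs] at this
  have hpow : (r ^ 2 * u) ^ α / r = r ^ (2 * α - 1) * u ^ α := by
    rw [mul_rpow (by positivity) hu, ← rpow_natCast, ← rpow_mul hx.le, rpow_sub_one hx.ne',
      Nat.cast_ofNat]
    ring
  calc _ ≤ ‖ξ t - ξ (t - r ^ 2 * u)‖ / r := abs_norm_inv_smul_sub_one_le hx
    _ ≤ L * (r ^ 2 * u) ^ α / r := by gcongr
    _ = L * r ^ (2 * α - 1) * u ^ α := by rw [mul_div_assoc, hpow, mul_assoc]

lemma tendsto_norm_rescaled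
    (hH : ∀ a ∈ Icc 0 T, ∀ b ∈ Icc 0 T, ‖ξ a - ξ b‖ ≤ L * |a - b| ^ α)
    (ht : 0 < t) (htT : t ≤ T) (hα : 1 / 2 < α) {u : ℝ} (hu : 0 ≤ u) :
    Tendsto (fun x => ‖‖x - ξ t‖⁻¹ • (x - ξ (t - ‖x - ξ t‖ ^ 2 * u))‖) (𝓝[≠] ξ t) (𝓝 1) := by
  have hbound : Tendsto (fun x => L * ‖x - ξ t‖ ^ (2 * α - 1) * u ^ α) (𝓝[≠] ξ t) (𝓝 0) := by
    simpa using
      ((tendsto_norm_sub_rpow_nhdsNE (ξ t) (by linarith)).const_mul L).mul_const (u ^ α)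
  rw [tendsto_iff_norm_sub_tendsto_zero]
  refine squeeze_zero' (.of_forall fun _ => norm_nonneg _) ?_ hbound
  filter_upwards [eventually_pos_and_norm_sub_sq_mul_le (ξ t) (u := u) ht] with x ⟨hx, hxt⟩
  exact abs_norm_rescaled_sub_one_le hH htT hx hu hxt

end HolderCurve

section Rescaled

variable {N : ℕ} {ξ : ℝ → EuclideanSpace ℝ (Fin N)} {T L α t : ℝ}

def rescaledIntegrand (N : ℕ) (ξ : ℝ → EuclideanSpace ℝ (Fin N)) (t : ℝ)
    (x : EuclideanSpace ℝ (Fin N)) : ℝ → ℝ :=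
  (Ioc 0 (t / ‖x - ξ t‖ ^ 2)).indicator fun u =>
    heatKernel N (‖x - ξ t‖⁻¹ • (x - ξ (t - ‖x - ξ t‖ ^ 2 * u))) u

lemma integral_rescaledIntegrand (ht : 0 ≤ t) {x : EuclideanSpace ℝ (Fin N)} (hx : x ≠ ξ t) :
    ∫ u in Ioi 0, rescaledIntegrand N ξ t x u = ‖x - ξ t‖ ^ ((N : ℝ) - 2) * Fsol N ξ x t := by
  rw [Fsol_eq_integral_rescaled ξ x ht (norm_pos_iff.2 (sub_ne_zero.2 hx)),
    intervalIntegral.integral_of_le (by positivity), rescaledIntegrand,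
    integral_indicator measurableSet_Ioc, Measure.restrict_restrict measurableSet_Ioc,
    inter_eq_self_of_subset_left Ioc_subset_Ioi_self]

lemma aestronglyMeasurable_rescaledIntegrand (hξ : ContinuousOn ξ (Icc 0 T)) (htT : t ≤ T)
    {x : EuclideanSpace ℝ (Fin N)} (hx : x ≠ ξ t) :
    AEStronglyMeasurable (rescaledIntegrand N ξ t x) (volume.restrict (Ioi 0)) := by
  have hr : 0 < ‖x - ξ t‖ ^ 2 := pow_pos (norm_pos_iff.2 (sub_ne_zero.2 hx)) 2
  rw [rescaledIntegrand, aestronglyMeasurable_indicator_iff measurableSet_Ioc,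
    Measure.restrict_restrict measurableSet_Ioc, inter_eq_self_of_subset_left Ioc_subset_Ioi_self]
  have hcomp :
      ContinuousOn (fun u => ξ (t - ‖x - ξ t‖ ^ 2 * u)) (Ioc 0 (t / ‖x - ξ t‖ ^ 2)) := by
    refine hξ.comp (by fun_prop) fun u ⟨hu0, hut⟩ => ?_
    rw [le_div_iff₀' hr] at hut
    have := mul_pos hr hu0
    constructor <;> linarith
  exact ((continuousOn_const.fun_sub hcomp).fun_const_smul _ |>.heatKernel fun u hu => hu.1)
    |>.aestronglyMeasurable measurableSet_Ioc

lemma eventually_norm_rescaledIntegrand_le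
    (hH : ∀ a ∈ Icc 0 T, ∀ b ∈ Icc 0 T, ‖ξ a - ξ b‖ ≤ L * |a - b| ^ α)
    (htT : t ≤ T) (hα : 1 / 2 < α) :
    ∀ᶠ x in 𝓝[≠] ξ t, ∀ u ∈ Ioi (0 : ℝ),
      ‖rescaledIntegrand N ξ t x u‖ ≤ (4 * π * u) ^ (-(N : ℝ) / 2) * exp ((1 - u⁻¹) / 16) := by
  have hsmall : ∀ᶠ x in 𝓝[≠] ξ t, L * ‖x - ξ t‖ ^ (2 * α - 1) ≤ 1 / 2 := by
    refine Tendsto.eventually_le_const (show (0 : ℝ) < 1 / 2 by norm_num) ?_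
    simpa using (tendsto_norm_sub_rpow_nhdsNE (ξ t) (by linarith : 0 < 2 * α - 1)).const_mul L
  filter_upwards [hsmall, eventually_mem_nhdsWithin] with x hxsmall hx u hu
  have hu0 : 0 < u := hu
  have hr : 0 < ‖x - ξ t‖ := norm_pos_iff.2 (sub_ne_zero.2 hx)
  by_cases hmem : u ∈ Ioc 0 (t / ‖x - ξ t‖ ^ 2)
  · rw [rescaledIntegrand, indicator_of_mem hmem, norm_of_nonneg (heatKernel_nonneg hu0.le _)]
    refine heatKernel_le_of_half_le_norm hu0 fun hu1 => ?_
    have hdev := abs_norm_rescaled_sub_one_le hH htT hr hu0.le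
      ((le_div_iff₀' (pow_pos hr 2)).1 hmem.2)
    have huα : u ^ α ≤ 1 := rpow_le_one hu0.le hu1 (by linarith)
    have hdev_le : L * ‖x - ξ t‖ ^ (2 * α - 1) * u ^ α ≤ 1 / 2 := by
      nlinarith [(abs_nonneg _).trans hdev, rpow_pos_of_pos hu0 α]
    linarith [(abs_le.1 (hdev.trans hdev_le)).1]
  · rw [rescaledIntegrand, indicator_of_notMem hmem, norm_zero]
    positivity

lemma tendsto_rescaledIntegrand
    (hH : ∀ a ∈ Icc 0 T, ∀ b ∈ Icc 0 T, ‖ξ a - ξ b‖ ≤ L * |a - b| ^ α)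
    (ht : 0 < t) (htT : t ≤ T) (hα : 1 / 2 < α) {u : ℝ} (hu : 0 < u) :
    Tendsto (fun x => rescaledIntegrand N ξ t x u) (𝓝[≠] ξ t)
      (𝓝 ((4 * π * u) ^ (-(N : ℝ) / 2) * exp (-1 / (4 * u)))) := by
  have hlim := (((tendsto_norm_rescaled hH ht htT hα hu.le).pow 2).neg.div_const (4 * u)).rexp
    |>.const_mul ((4 * π * u) ^ (-(N : ℝ) / 2))
  rw [one_pow] at hlim
  refine hlim.congr' ?_
  filter_upwards [eventually_pos_and_norm_sub_sq_mul_le (ξ t) (u := u) ht] with x ⟨hx, hxt⟩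
  have hmem : u ∈ Ioc 0 (t / ‖x - ξ t‖ ^ 2) := ⟨hu, by rwa [le_div_iff₀' (by positivity)]⟩
  rw [rescaledIntegrand, indicator_of_mem hmem, heatKernel]

end Rescaled

theorem Fsol_asymptotics_general {N : ℕ} (hN : 3 ≤ N) (T α L : ℝ)
    (hα : 1 / 2 < α)
    (ξ : ℝ → EuclideanSpace ℝ (Fin N))
    (hHolder : ∀ a ∈ Icc (0 : ℝ) T, ∀ b ∈ Icc (0 : ℝ) T, ‖ξ a - ξ b‖ ≤ L * |a - b| ^ α)
    (t : ℝ) (ht : t ∈ Ioo (0 : ℝ) T) :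
    Tendsto (fun x : EuclideanSpace ℝ (Fin N) =>
        ‖x - ξ t‖ ^ ((N : ℝ) - 2) * Fsol N ξ x t)
      (nhdsWithin (ξ t) {x | x ≠ ξ t})
      (nhds (1 / ((N : ℝ) * ((N : ℝ) - 2)
        * (volume (ball (0 : EuclideanSpace ℝ (Fin N)) 1)).toReal))) := by
  obtain ⟨ht0, htT⟩ := ht
  have hN2 : (2 : ℝ) < N := by exact_mod_cast hN
  have hξ : ContinuousOn ξ (Icc 0 T) := continuousOn_of_norm_sub_le_rpow (by linarith) hHolder
  have hlim := tendsto_integral_filter_of_dominated_convergence (l := 𝓝[≠] ξ t) _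
    (eventually_mem_nhdsWithin.mono fun x hx =>
      aestronglyMeasurable_rescaledIntegrand hξ htT.le hx)
    ((eventually_norm_rescaledIntegrand_le hHolder htT.le hα).mono fun x hx =>
      (ae_restrict_iff' measurableSet_Ioi).2 (.of_forall hx))
    (integrableOn_four_pi_mul_rpow_mul_exp hN2)
    ((ae_restrict_iff' measurableSet_Ioi).2 (.of_forall fun u hu =>
      tendsto_rescaledIntegrand hHolder ht0 htT.le hα hu))
  rw [integral_four_pi_mul_rpow_mul_exp hN2, ← one_div_div, ← natCast_mul_volume_ball_one hN]
    at hlim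
  exact hlim.congr' (eventually_mem_nhdsWithin.mono fun x hx =>
    integral_rescaledIntegrand ht0.le hx)

/-- Proposition 4.4: for N ≥ 3 and ξ Hölder with exponent α > 1/2,
F(x,t) ~ (1/(N(N-2)ω_N)) |x-ξ(t)|^{2-N} as x → ξ(t). -/
theorem Fsol_asymptotics {N : ℕ} (hN : 3 ≤ N) (T α L : ℝ) (hT : 0 < T)
    (hα : 1 / 2 < α) (hL : 0 < L)
    (ξ : ℝ → EuclideanSpace ℝ (Fin N))
    (hHolder : ∀ a ∈ Icc (0 : ℝ) T, ∀ b ∈ Icc (0 : ℝ) T, ‖ξ a - ξ b‖ ≤ L * |a - b| ^ α)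
    (t : ℝ) (ht : t ∈ Ioo (0 : ℝ) T) :
    Tendsto (fun x : EuclideanSpace ℝ (Fin N) =>
        ‖x - ξ t‖ ^ ((N : ℝ) - 2) * Fsol N ξ x t)
      (nhdsWithin (ξ t) {x | x ≠ ξ t})
      (nhds (1 / ((N : ℝ) * ((N : ℝ) - 2)
        * (volume (ball (0 : EuclideanSpace ℝ (Fin N)) 1)).toReal))) :=
  Fsol_asymptotics_general hN T α L hα ξ hHolder t ht
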